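/- Let n be even with n > 7, let α = (3, 5, 4) and β = (3, 4, ..., n) be permutations of {1, ..., n}, and set τ = βαβ⁻¹αβ⁻¹α⁻¹βα⁻¹. Then the three permutations (βα⁻¹)², τ, and (αβ⁻¹)⁻¹τ(αβ⁻¹) generate the alternating group on {3, ..., n}. -/

import Mathlib

/-!
Write `(a b c …)` for `[a, b, c, …].formPerm`. Then `d = α⁻¹ * β` is the cycle `(3 5 6 ⋯ n 4)`, and
`τ = α⁻¹ (βαβ⁻¹)⁻¹ α (β⁻¹αβ)` is a product of four 3-cycles on `{3, 4, 5, 6, n}`, equal to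
`(3 n 4 6 5)`; the generators are `d²`, `τ` and `d⁻¹τd`. Conjugating by `d²` gives the 5-cycles
`dτd⁻¹ = (5 4 3 7 6)` and `d²τd⁻² = (6 3 5 8 7)`, and short words in these are the 3-cycles
`(3 5 v)` for `v = 4, 6, 7`. As `g = (3 5 6)(3 5 7)` sends `6 ↦ 3` and `7 ↦ 5`, conjugation by
`g d²` carries `(3 5 v)` to `(3 5 v+2)` for `v ≥ 6`. So every 3-cycle `(3 5 v)` on `{3, …, n}` is
reached, and these generate the alternating group on `{3, …, n}`.

Identities between permutations of a few distinct points are checked by `decide` in `Perm (Fin k)`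
and transported along the embedding `List.get` of a duplicate-free list.
-/

open Equiv Equiv.Perm Subgroup

section

variable {α β : Type*} [DecidableEq α] [DecidableEq β]

theorem List.formPerm_map_perm (g : Equiv.Perm α) (l : List α) :
    (l.map g).formPerm = g * l.formPerm * g⁻¹ := by
  induction l with
  | nil => simp
  | cons x l ih =>
    cases l with
    | nil => simp
    | cons y l =>
      simp only [List.map_cons, List.formPerm_cons_cons] at ih ⊢
      rw [ih, swap_apply_apply]
      group

namespace Equiv.Perm

theorem viaEmbedding_swap (ι : α ↪ β) (a b : α) :
    (swap a b).viaEmbedding ι = swap (ι a) (ι b) := by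
  ext x
  by_cases hx : x ∈ Set.range ι
  · obtain ⟨y, rfl⟩ := hx
    rw [viaEmbedding_apply, swap_apply_def, swap_apply_def]
    simp only [ι.injective.eq_iff]
    split_ifs <;> rfl
  · rw [viaEmbedding_apply_of_notMem _ _ _ hx, swap_apply_of_ne_of_ne] <;>
      rintro rfl <;> exact hx ⟨_, rfl⟩

theorem viaEmbeddingHom_formPerm (ι : α ↪ β) (l : List α) :
    viaEmbeddingHom ι l.formPerm = (l.map ι).formPerm := by
  induction l with
  | nil => simp
  | cons x l ih =>
    cases l with
    | nil => simp
    | cons y l =>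
      simp only [List.map_cons, List.formPerm_cons_cons, map_mul] at ih ⊢
      rw [ih, viaEmbeddingHom_apply, viaEmbedding_swap]

theorem formPerm_three_inv {x y v : α} (h : [x, y, v].Nodup) :
    [x, y, v].formPerm⁻¹ = [x, v, y].formPerm := by
  have key := congrArg (viaEmbeddingHom ⟨_, List.nodup_iff_injective_get.mp h⟩)
    (by decide : [(0 : Fin 3), 1, 2].formPerm⁻¹ = [0, 2, 1].formPerm)
  simp only [map_inv, viaEmbeddingHom_formPerm] at key
  exact key

theorem formPerm_three_conj {x y v w : α} (h : [x, y, v, w].Nodup) :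
    [x, y, w].formPerm⁻¹ * [x, y, v].formPerm * [x, y, w].formPerm = [x, v, w].formPerm := by
  have key := congrArg (viaEmbeddingHom ⟨_, List.nodup_iff_injective_get.mp h⟩)
    (by decide : [(0 : Fin 4), 1, 3].formPerm⁻¹ * [0, 1, 2].formPerm * [0, 1, 3].formPerm =
      [0, 2, 3].formPerm)
  simp only [map_mul, map_inv, viaEmbeddingHom_formPerm] at key
  exact key

theorem formPerm_three_mul {x a b c : α} (h : [x, a, b, c].Nodup) :
    [x, a, b].formPerm * [x, b, c].formPerm = [a, b, c].formPerm := by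
  have key := congrArg (viaEmbeddingHom ⟨_, List.nodup_iff_injective_get.mp h⟩)
    (by decide : [(0 : Fin 4), 1, 2].formPerm * [0, 2, 3].formPerm = [1, 2, 3].formPerm)
  simp only [map_mul, viaEmbeddingHom_formPerm] at key
  exact key

theorem eq_formPerm_of_apply {σ : Perm α} {a b c : α} (h : [a, b, c].Nodup) (ha : σ a = b)
    (hb : σ b = c) (hc : σ c = a) (hfix : ∀ x, x ∉ [a, b, c] → σ x = x) :
    σ = [a, b, c].formPerm := by
  ext x
  by_cases hx : x ∈ [a, b, c]
  · simp only [List.nodup_cons, List.mem_cons, List.not_mem_nil, or_false, not_or] at h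
    obtain ⟨⟨hab, hac⟩, hbc, -⟩ := h
    simp only [List.mem_cons, List.not_mem_nil, or_false] at hx
    rcases hx with rfl | rfl | rfl <;>
      simp [List.formPerm_cons_cons, swap_apply_def, *, Ne.symm hac, Ne.symm hbc]
  · rw [hfix x hx, List.formPerm_apply_of_notMem hx]

theorem sign_formPerm_three [Fintype α] {a b c : α} (h : [a, b, c].Nodup) :
    sign [a, b, c].formPerm = 1 := by
  simp only [List.nodup_cons, List.mem_cons, List.not_mem_nil, or_false, not_or] at h
  rw [List.formPerm_cons_cons, List.formPerm_pair, map_mul, sign_swap h.1.1, sign_swap h.2.1]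
  rfl

section Generation

variable {G : Subgroup (Perm α)} {x y : α}

theorem formPerm_three_mem_of_head (hxy : x ≠ y) {s : Set α}
    (hG : ∀ v ∈ s, v ≠ x → v ≠ y → [x, y, v].formPerm ∈ G) {v w : α} (hv : v ∈ s) (hw : w ∈ s)
    (h : [x, v, w].Nodup) : [x, v, w].formPerm ∈ G := by
  simp only [List.nodup_cons, List.mem_cons, List.not_mem_nil, or_false, not_or] at h
  obtain ⟨⟨hxv, hxw⟩, hvw, -⟩ := h
  rcases eq_or_ne v y with rfl | hvy
  · exact hG w hw (Ne.symm hxw) (Ne.symm hvw)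
  rcases eq_or_ne w y with rfl | hwy
  · rw [← formPerm_three_inv (by grind [List.nodup_cons])]
    exact inv_mem (hG v hv (Ne.symm hxv) hvy)
  have hyw := hG w hw (Ne.symm hxw) hwy
  rw [← formPerm_three_conj (y := y) (by grind [List.nodup_cons])]
  exact mul_mem (mul_mem (inv_mem hyw) (hG v hv (Ne.symm hxv) hvy)) hyw

theorem formPerm_three_mem (hxy : x ≠ y) {s : Set α}
    (hG : ∀ v ∈ s, v ≠ x → v ≠ y → [x, y, v].formPerm ∈ G) {a b c : α} (ha : a ∈ s) (hb : b ∈ s)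
    (hc : c ∈ s) (h : [a, b, c].Nodup) : [a, b, c].formPerm ∈ G := by
  have head {v w : α} : v ∈ s → w ∈ s → [x, v, w].Nodup → [x, v, w].formPerm ∈ G :=
    formPerm_three_mem_of_head hxy hG
  by_cases hxa : x = a
  · subst hxa; exact head hb hc h
  by_cases hxb : x = b
  · subst hxb
    rw [← List.formPerm_rotate_one _ h]
    exact head hc ha (List.nodup_rotate.2 h : ([_, _, _].rotate 1).Nodup)
  by_cases hxc : x = c
  · subst hxc
    rw [← List.formPerm_rotate _ h 2]
    exact head ha hb (List.nodup_rotate.2 h : ([_, _, _].rotate 2).Nodup)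
  rw [← formPerm_three_mul (x := x) (by simp_all)]
  exact mul_mem (head ha hb (by simp_all)) (head hb hc (by simp_all))

theorem range_ofSubtype_inf_alternatingGroup_le [Fintype α] (hxy : x ≠ y) {s : Finset α}
    (hG : ∀ v ∈ s, v ≠ x → v ≠ y → [x, y, v].formPerm ∈ G) :
    (ofSubtype : Perm s →* Perm α).range ⊓ alternatingGroup α ≤ G := by
  rw [← alternatingGroup.map_ofSubtype, ← closure_three_cycles_eq_alternating,
    MonoidHom.map_closure, closure_le]
  rintro _ ⟨g, hg, rfl⟩
  obtain ⟨a, ha⟩ : g.support.Nonempty := Finset.card_pos.mp (by rw [hg.card_support]; norm_num)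
  rw [hg.eq_swap_mul_swap_iff_mem_support.mpr ha, map_mul, ofSubtype_swap_eq, ofSubtype_swap_eq,
    ← List.formPerm_pair (g a : α), ← List.formPerm_cons_cons]
  exact formPerm_three_mem hxy hG a.2 (g a).2 (g (g a)).2
    ((hg.nodup_iff_mem_support.mpr ha).map Subtype.val_injective)

theorem formPerm_three_mem_of_conj {g : Perm α} (hg : g ∈ G) {a b c d x e : α}
    (hc : [a, b, c].formPerm ∈ G) (hd : [a, b, d].formPerm ∈ G) (hx : [a, b, x].formPerm ∈ G)
    (ha : g a = c) (hb : g b = d) (he : g x = e) (h : [a, b, c, d, e].Nodup) :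
    [a, b, e].formPerm ∈ G := by
  have hconj : g * [a, b, x].formPerm * g⁻¹ = [c, d, e].formPerm := by
    rw [← List.formPerm_map_perm]
    simp [ha, hb, he]
  have key : ([a, b, c].formPerm * [a, b, d].formPerm) * [c, d, e].formPerm *
      ([a, b, c].formPerm * [a, b, d].formPerm)⁻¹ = [a, b, e].formPerm := by
    have key := congrArg (viaEmbeddingHom ⟨_, List.nodup_iff_injective_get.mp h⟩)
      (by decide : ([(0 : Fin 5), 1, 2].formPerm * [0, 1, 3].formPerm) * [2, 3, 4].formPerm *
        ([0, 1, 2].formPerm * [0, 1, 3].formPerm)⁻¹ = [0, 1, 4].formPerm)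
    simp only [map_mul, map_inv, viaEmbeddingHom_formPerm] at key
    exact key
  have hcd := mul_mem hc hd
  rw [← key, ← hconj]
  exact mul_mem (mul_mem hcd (mul_mem (mul_mem hg hx) (inv_mem hg))) (inv_mem hcd)

end Generation

theorem formPerm_word_eq_five_cycle {σ ρ : Perm α} {a b c d e : α} (h : [a, b, c, d, e].Nodup)
    (hσ : σ = [a, c, b].formPerm) (ha : ρ a = b) (hb : ρ b = c) (hc : ρ c = d) (he : ρ e = a) :
    σ⁻¹ * ρ * σ⁻¹ * ρ⁻¹ * σ * ρ⁻¹ * σ * ρ = [a, e, b, d, c].formPerm := by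
  have hconj : ρ * σ * ρ⁻¹ = [b, d, c].formPerm := by
    rw [hσ, ← List.formPerm_map_perm]
    simp [ha, hb, hc]
  have hconj' : ρ⁻¹ * σ * ρ = [e, b, a].formPerm := by
    have := List.formPerm_map_perm ρ⁻¹ [a, c, b]
    rw [inv_inv] at this
    rw [hσ, ← this, List.map_cons, List.map_cons, List.map_cons, List.map_nil,
      inv_eq_iff_eq.2 he.symm, inv_eq_iff_eq.2 hb.symm, inv_eq_iff_eq.2 ha.symm]
  have key := congrArg (viaEmbeddingHom ⟨_, List.nodup_iff_injective_get.mp h⟩)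
    (by decide : [(0 : Fin 5), 2, 1].formPerm⁻¹ * [1, 3, 2].formPerm⁻¹ * [0, 2, 1].formPerm *
      [4, 1, 0].formPerm = [0, 4, 1, 3, 2].formPerm)
  simp only [map_mul, map_inv, viaEmbeddingHom_formPerm] at key
  calc σ⁻¹ * ρ * σ⁻¹ * ρ⁻¹ * σ * ρ⁻¹ * σ * ρ = σ⁻¹ * (ρ * σ * ρ⁻¹)⁻¹ * σ * (ρ⁻¹ * σ * ρ) := by
        group
    _ = [a, e, b, d, c].formPerm := by rw [hconj, hconj', hσ]; exact key

set_option maxRecDepth 2000 in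
theorem formPerm_three_mem_closure_five_cycles {a b c d e f : α} (h : [a, b, c, d, e, f].Nodup) :
    ∀ v ∈ [b, d, e], [a, c, v].formPerm ∈
      closure {[c, b, a, e, d].formPerm, [d, a, c, f, e].formPerm} := by
  set t₁ := [c, b, a, e, d].formPerm
  set t₂ := [d, a, c, f, e].formPerm
  set ι : Fin 6 ↪ α := ⟨_, List.nodup_iff_injective_get.mp h⟩
  have hb : t₂ * t₁ * t₂ * t₂ * t₁⁻¹ = [a, c, b].formPerm := by
    have key := congrArg (viaEmbeddingHom ι) (by decide :
      [(3 : Fin 6), 0, 2, 5, 4].formPerm * [2, 1, 0, 4, 3].formPerm * [3, 0, 2, 5, 4].formPerm *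
        [3, 0, 2, 5, 4].formPerm * [2, 1, 0, 4, 3].formPerm⁻¹ = [0, 2, 1].formPerm)
    simp only [map_mul, map_inv, viaEmbeddingHom_formPerm] at key
    exact key
  have hd : t₁ * t₁ * t₂⁻¹ * t₁ * t₂⁻¹ * t₂⁻¹ = [a, c, d].formPerm := by
    have key := congrArg (viaEmbeddingHom ι) (by decide :
      [(2 : Fin 6), 1, 0, 4, 3].formPerm * [2, 1, 0, 4, 3].formPerm * [3, 0, 2, 5, 4].formPerm⁻¹ *
        [2, 1, 0, 4, 3].formPerm * [3, 0, 2, 5, 4].formPerm⁻¹ * [3, 0, 2, 5, 4].formPerm⁻¹ =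
        [0, 2, 3].formPerm)
    simp only [map_mul, map_inv, viaEmbeddingHom_formPerm] at key
    exact key
  have he : t₂⁻¹ * t₁ * t₂⁻¹ * t₂⁻¹ * t₁ * t₁ = [a, c, e].formPerm := by
    have key := congrArg (viaEmbeddingHom ι) (by decide :
      [(3 : Fin 6), 0, 2, 5, 4].formPerm⁻¹ * [2, 1, 0, 4, 3].formPerm *
        [3, 0, 2, 5, 4].formPerm⁻¹ * [3, 0, 2, 5, 4].formPerm⁻¹ * [2, 1, 0, 4, 3].formPerm *
        [2, 1, 0, 4, 3].formPerm = [0, 2, 4].formPerm)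
    simp only [map_mul, map_inv, viaEmbeddingHom_formPerm] at key
    exact key
  clear_value t₁ t₂
  have h₁ : t₁ ∈ closure {t₁, t₂} := subset_closure (by simp)
  have h₂ : t₂ ∈ closure {t₁, t₂} := subset_closure (by simp)
  simp only [List.mem_cons, List.not_mem_nil, or_false]
  rintro v (rfl | rfl | rfl)
  · exact hb ▸ mul_mem (mul_mem (mul_mem (mul_mem h₂ h₁) h₂) h₂) (inv_mem h₁)
  · exact hd ▸ mul_mem (mul_mem (mul_mem (mul_mem (mul_mem h₁ h₁) (inv_mem h₂)) h₁)
      (inv_mem h₂)) (inv_mem h₂)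
  · exact he ▸ mul_mem (mul_mem (mul_mem (mul_mem (mul_mem (inv_mem h₂) h₁) (inv_mem h₂))
      (inv_mem h₂)) h₁) h₁

theorem mem_range_ofSubtype_iff_forall_apply [Fintype α] {p : α → Prop} [DecidablePred p]
    {g : Perm α} : g ∈ (ofSubtype : Perm (Subtype p) →* Perm α).range ↔ ∀ x, ¬p x → g x = x := by
  rw [mem_range_ofSubtype_iff]
  exact forall_congr' fun x => by rw [Finset.mem_coe, mem_support]; tauto

theorem closure_word_le_inf_alternatingGroup [Fintype α] {K : Subgroup (Perm α)} {σ ρ : Perm α}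
    (hσ : sign σ = 1) (hσK : σ ∈ K) (hρK : ρ ∈ K) :
    closure {(σ⁻¹ * ρ) ^ 2, σ⁻¹ * ρ * σ⁻¹ * ρ⁻¹ * σ * ρ⁻¹ * σ * ρ,
      (ρ⁻¹ * σ) * (σ⁻¹ * ρ * σ⁻¹ * ρ⁻¹ * σ * ρ⁻¹ * σ * ρ) * (ρ⁻¹ * σ)⁻¹} ≤
      K ⊓ alternatingGroup α := by
  rw [closure_le]
  rintro _ (rfl | rfl | rfl) <;> rw [SetLike.mem_coe, mem_inf, mem_alternatingGroup] <;>
    refine ⟨by apply_rules [Subgroup.mul_mem, Subgroup.inv_mem, Subgroup.pow_mem], ?_⟩ <;>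
    simp only [map_mul, map_inv, map_pow, hσ, Int.units_sq] <;> group

end Equiv.Perm

end

open Fin.NatCast

section

variable {n : ℕ} {d τ : Perm (Fin (n + 1))}

theorem formPerm_three_five_mem_closure_base (hn : 7 < n)
    (hτ : τ = [3, (n : Fin (n + 1)), 4, 6, 5].formPerm) (hd3 : d 3 = 5) (hd4 : d 4 = 3)
    (hdn : d n = 4) (hd : ∀ j : ℕ, 5 ≤ j → j < n → d j = ((j + 1 : ℕ) : Fin (n + 1))) :
    ∀ w ∈ [4, 6, 7], [3, 5, w].formPerm ∈ closure {d ^ 2, τ, d⁻¹ * τ * d} := by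
  have hc : d ^ 2 ∈ closure {d ^ 2, τ, d⁻¹ * τ * d} := subset_closure (by simp)
  have hd5 : d 5 = 6 := hd 5 (by omega) (by omega)
  have hd6 : d 6 = 7 := hd 6 (by omega) (by omega)
  have hd7 : d 7 = 8 := hd 7 (by omega) (by omega)
  have ht₁ : d * τ * d⁻¹ = [5, 4, 3, 7, 6].formPerm := by
    rw [hτ, ← List.formPerm_map_perm]
    simp only [List.map_cons, List.map_nil, hd3, hd4, hd5, hd6, hdn]
  have ht₂ : d * (d * τ * d⁻¹) * d⁻¹ = [6, 3, 5, 8, 7].formPerm := by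
    rw [ht₁, ← List.formPerm_map_perm]
    simp only [List.map_cons, List.map_nil, hd3, hd4, hd5, hd6, hd7]
  have h38 : [(3 : Fin (n + 1)), 4, 5, 6, 7, 8].Nodup :=
    .of_map Fin.val (by simp (disch := omega) [Nat.mod_eq_of_lt])
  refine fun w hw => (closure_le _).2 ?_ (formPerm_three_mem_closure_five_cycles h38 w hw)
  rw [← ht₁, ← ht₂]
  rintro _ (rfl | rfl)
  · rw [show d * τ * d⁻¹ = d ^ 2 * (d⁻¹ * τ * d) * (d ^ 2)⁻¹ by group]
    exact mul_mem (mul_mem hc (subset_closure (by simp))) (inv_mem hc)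
  · rw [show d * (d * τ * d⁻¹) * d⁻¹ = d ^ 2 * τ * (d ^ 2)⁻¹ by rw [sq]; group]
    exact mul_mem (mul_mem hc (subset_closure (by simp))) (inv_mem hc)

theorem formPerm_three_five_mem_closure (hn : 7 < n)
    (hτ : τ = [3, (n : Fin (n + 1)), 4, 6, 5].formPerm) (hd3 : d 3 = 5) (hd4 : d 4 = 3)
    (hdn : d n = 4) (hd : ∀ j : ℕ, 5 ≤ j → j < n → d j = ((j + 1 : ℕ) : Fin (n + 1)))
    (v : Fin (n + 1)) (hv : 3 ≤ v.val) (hv3 : v ≠ 3) (hv5 : v ≠ 5) :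
    [3, 5, v].formPerm ∈ closure {d ^ 2, τ, d⁻¹ * τ * d} := by
  have hbase := formPerm_three_five_mem_closure_base hn hτ hd3 hd4 hdn hd
  have hd5 : d 5 = 6 := hd 5 (by omega) (by omega)
  have hd6 : d 6 = 7 := hd 6 (by omega) (by omega)
  have hstep (k : ℕ) (hk : 6 ≤ k) (hkn : k + 2 ≤ n)
      (hmem : [3, 5, (k : Fin (n + 1))].formPerm ∈ closure {d ^ 2, τ, d⁻¹ * τ * d}) :
      [3, 5, ((k + 2 : ℕ) : Fin (n + 1))].formPerm ∈ closure {d ^ 2, τ, d⁻¹ * τ * d} := by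
    refine formPerm_three_mem_of_conj (g := d ^ 2) (subset_closure (by simp)) (hbase 6 (by simp))
      (hbase 7 (by simp)) hmem ?_ ?_ ?_ (.of_map Fin.val ?_)
    · rw [sq, Perm.mul_apply, hd3, hd5]
    · rw [sq, Perm.mul_apply, hd5, hd6]
    · rw [sq, Perm.mul_apply, hd k (by omega) (by omega)]; exact hd (k + 1) (by omega) (by omega)
    · simp (disch := omega) only [List.map_cons, List.map_nil, Fin.coe_ofNat_eq_mod,
        Fin.val_natCast, Nat.mod_eq_of_lt, List.nodup_cons, List.mem_cons, List.not_mem_nil,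
        List.nodup_nil, not_or, or_false, not_false_eq_true, and_true]
      omega
  have hall (k : ℕ) : 6 ≤ k → k ≤ n → [3, 5, (k : Fin (n + 1))].formPerm ∈
      closure {d ^ 2, τ, d⁻¹ * τ * d} := by
    induction k using Nat.strong_induction_on with
    | _ k ih =>
      intro hk hkn
      rcases (show k = 6 ∨ k = 7 ∨ 8 ≤ k by omega) with rfl | rfl | hk8
      · exact hbase 6 (by simp)
      · exact hbase 7 (by simp)
      · obtain ⟨j, rfl⟩ : ∃ j, k = j + 2 := ⟨k - 2, by omega⟩
        exact hstep j (by omega) hkn (ih j (by omega) (by omega) (by omega))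
  have hval (m : ℕ) (hm : m ≤ n) (hvm : v ≠ m) : v.val ≠ m := fun h =>
    hvm (by rw [← Fin.cast_val_eq_self v, h])
  have h3 := hval 3 (by omega) hv3
  have h5 := hval 5 (by omega) hv5
  rw [← Fin.cast_val_eq_self v]
  rcases (show v.val = 4 ∨ 6 ≤ v.val by omega) with h4 | h6
  · rw [h4]; exact hbase 4 (by simp)
  · exact hall v.val h6 (Nat.lt_succ_iff.mp v.isLt)

end

theorem word_eq_formPerm_of_apply {n : ℕ} (hn : 6 < n) {α β : Perm (Fin (n + 1))}
    (hα : α = [3, 5, 4].formPerm)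
    (hβ₁ : ∀ i : ℕ, 3 ≤ i → i < n → β (i : Fin (n + 1)) = ((i + 1 : ℕ) : Fin (n + 1)))
    (hβ₂ : β (n : Fin (n + 1)) = 3) :
    α⁻¹ * β * α⁻¹ * β⁻¹ * α * β⁻¹ * α * β = [3, (n : Fin (n + 1)), 4, 6, 5].formPerm := by
  have h3456n : [(3 : Fin (n + 1)), 4, 5, 6, n].Nodup := .of_map Fin.val (by
    simp (disch := omega) only [List.map_cons, List.map_nil, Fin.coe_ofNat_eq_mod,
      Fin.val_natCast, Nat.mod_eq_of_lt, List.nodup_cons, List.mem_cons, List.not_mem_nil,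
      List.nodup_nil, not_or, or_false, not_false_eq_true, and_true]
    omega)
  exact formPerm_word_eq_five_cycle h3456n hα (hβ₁ 3 (by omega) (by omega))
    (hβ₁ 4 (by omega) (by omega)) (hβ₁ 5 (by omega) (by omega)) hβ₂

theorem inv_mul_apply_of_apply {n : ℕ} (hn : 4 < n) {α β : Perm (Fin (n + 1))}
    (hα₁ : α 3 = 5) (hα₂ : α 5 = 4) (hα₃ : α 4 = 3)
    (hα₄ : ∀ x : Fin (n + 1), x ∉ ({3, 4, 5} : Set (Fin (n + 1))) → α x = x)
    (hβ₁ : ∀ i : ℕ, 3 ≤ i → i < n → β (i : Fin (n + 1)) = ((i + 1 : ℕ) : Fin (n + 1)))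
    (hβ₂ : β (n : Fin (n + 1)) = 3) :
    (α⁻¹ * β) 3 = 5 ∧ (α⁻¹ * β) 4 = 3 ∧ (α⁻¹ * β) n = 4 ∧
      ∀ j : ℕ, 5 ≤ j → j < n → (α⁻¹ * β) j = ((j + 1 : ℕ) : Fin (n + 1)) := by
  refine ⟨?_, ?_, ?_, fun j hj hjn => ?_⟩ <;> rw [Perm.mul_apply, inv_eq_iff_eq]
  · rw [hα₂]; exact hβ₁ 3 (by omega) (by omega)
  · rw [hα₁]; exact hβ₁ 4 (by omega) (by omega)
  · rw [hα₃, hβ₂]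
  · rw [hβ₁ j (by omega) hjn, hα₄]
    simp (disch := omega) only [Set.mem_insert_iff, Set.mem_singleton_iff, Fin.ext_iff,
      Fin.coe_ofNat_eq_mod, Fin.val_natCast, Nat.mod_eq_of_lt, not_or]
    omega

/-- Words are read left to right, so `x₁⋯x_k` is the Lean product `x_k * ⋯ * x₁`; the point `0`
of `Fin (n + 1)` is unused. -/
theorem stmt4 (n : ℕ) (hn : 7 < n)
    (α β : Equiv.Perm (Fin (n + 1)))
    (hα₁ : α 3 = 5) (hα₂ : α 5 = 4) (hα₃ : α 4 = 3)
    (hα₄ : ∀ x : Fin (n + 1), x ∉ ({3, 4, 5} : Set (Fin (n + 1))) → α x = x)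
    (hβ₁ : ∀ i : ℕ, 3 ≤ i → i < n → β (i : Fin (n + 1)) = ((i + 1 : ℕ) : Fin (n + 1)))
    (hβ₂ : β (n : Fin (n + 1)) = 3)
    (hβ₃ : ∀ x : Fin (n + 1), x.val < 3 → β x = x)
    (σ : Equiv.Perm (Fin (n + 1))) :
    σ ∈ Subgroup.closure
      ({(α⁻¹ * β) ^ 2,
        α⁻¹ * β * α⁻¹ * β⁻¹ * α * β⁻¹ * α * β,
        (β⁻¹ * α) * (α⁻¹ * β * α⁻¹ * β⁻¹ * α * β⁻¹ * α * β) * (β⁻¹ * α)⁻¹} :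
        Set (Equiv.Perm (Fin (n + 1)))) ↔
    (Equiv.Perm.sign σ = 1 ∧ ∀ x : Fin (n + 1), x.val < 3 → σ x = x) := by
  have h354 : [(3 : Fin (n + 1)), 5, 4].Nodup :=
    .of_map Fin.val (by simp (disch := omega) [Nat.mod_eq_of_lt])
  have hα : α = [3, 5, 4].formPerm := eq_formPerm_of_apply h354 hα₁ hα₂ hα₃ fun x hx =>
    hα₄ x (by simpa [or_comm, or_left_comm] using hx)
  have hτ := word_eq_formPerm_of_apply (by omega) hα hβ₁ hβ₂
  obtain ⟨hd3, hd4, hdn, hd⟩ := inv_mul_apply_of_apply (by omega) hα₁ hα₂ hα₃ hα₄ hβ₁ hβ₂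
  let s : Finset (Fin (n + 1)) := Finset.univ.filter (3 ≤ ·.val)
  have hfix (g : Perm (Fin (n + 1))) : g ∈ (ofSubtype : Perm s →* _).range ↔
      ∀ x : Fin (n + 1), x.val < 3 → g x = x := by
    rw [mem_range_ofSubtype_iff_forall_apply]; simp [s]
  have hαs : α ∈ (ofSubtype : Perm s →* _).range := (hfix α).2 fun x hx => hα₄ x (by
    simp (disch := omega) only [Set.mem_insert_iff, Set.mem_singleton_iff, Fin.ext_iff,
      Fin.coe_ofNat_eq_mod, Nat.mod_eq_of_lt, not_or]
    omega)
  rw [← and_comm, ← mem_alternatingGroup, ← hfix, ← mem_inf]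
  refine SetLike.ext_iff.mp (le_antisymm (closure_word_le_inf_alternatingGroup
    (hα ▸ sign_formPerm_three h354) hαs ((hfix β).2 hβ₃)) ?_) σ
  refine range_ofSubtype_inf_alternatingGroup_le (x := 3) (y := 5)
    (by simp (disch := omega) [Fin.ext_iff, Nat.mod_eq_of_lt]) fun v hv h3 h5 => ?_
  rw [hτ, show β⁻¹ * α = (α⁻¹ * β)⁻¹ by group, inv_inv]
  exact formPerm_three_five_mem_closure hn rfl hd3 hd4 hdn hd v (by simpa [s] using hv) h3 h5
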